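/- arXiv:2007.02859 — 2 statements merged into one kernel-verified Lean document; each statement's English description precedes it below -/
import Mathlib

section
/- (QFI lower bound after t erasures.) Let C be a binary code of length n, E ⊆ {1,...,n} of size t, and suppose C is t-disjoint with respect to E. Then 2 Tr(ρ² H²) - 2 Tr(ρHρH) = 8 ∑_{z ∈ F_2^t} p_z² Var(X_{C,z,E}), where ρ = ρ_C[E], H = Z_1 + ... + Z_{n-t}, p_z = |C_{z,E}|/|C|, and X_{C,z,E} is the Hamming weight of a uniformly random codeword in C_{z,E}. Since the QFI satisfies QFI ≥ 2Tr(ρ²H²) - 2Tr(ρHρH) = ‖[ρ,H]‖₂², it follows that Q_E(C) ≥ 8 ∑_z p_z² Var(X_{C,z,E}). -/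
open Finset Matrix

/-- Hamming weight of a binary vector. -/
def hwt {α : Type*} [Fintype α] (x : α → Bool) : ℕ :=
  (Finset.univ.filter (fun i => x i = true)).card

/-- Variance of `f` under the uniform distribution on the finite set `D`. -/
noncomputable def wvar {β : Type*} (D : Finset β) (f : β → ℕ) : ℝ :=
  (∑ x ∈ D, (f x : ℝ) ^ 2) / D.card - ((∑ x ∈ D, (f x : ℝ)) / D.card) ^ 2

/-- The generator `H = ∑_j Z_j` on qubits indexed by a finite type. -/
noncomputable def HopG (α : Type*) [Fintype α] [DecidableEq α] :
    Matrix (α → Bool) (α → Bool) ℂ :=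
  ∑ j : α, Matrix.diagonal (fun x => if x j then -1 else 1)


lemma hwt_eq_sum {α : Type*} [Fintype α] (x : α → Bool) :
    (hwt x : ℂ) = ∑ j : α, (if x j then (1:ℂ) else 0) := by
  rw [hwt, Finset.card_filter]
  push_cast
  rfl

lemma d_eq_card_sub {α : Type*} [Fintype α] (x : α → Bool) :
    ∑ j : α, (if x j then (-1:ℂ) else 1)
      = (Fintype.card α : ℂ) - 2 * (hwt x : ℂ) := by
  have h : ∀ j : α, (if x j then (-1:ℂ) else 1) = 1 - 2 * (if x j then (1:ℂ) else 0) := by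
    intro j; by_cases h : x j <;> simp [h] <;> ring
  rw [Finset.sum_congr rfl fun j _ => h j, Finset.sum_sub_distrib, Finset.sum_const,
    ← Finset.mul_sum, ← hwt_eq_sum]
  rw [Finset.card_univ, nsmul_eq_mul, mul_one]

lemma hwt_split {n : ℕ} {E : Finset (Fin n)} (z : {i : Fin n // i ∈ E} → Bool)
    (x : Fin n → Bool) (hx : ∀ i : {i : Fin n // i ∈ E}, x i = z i) :
    hwt x = hwt z + hwt (fun i : {i : Fin n // i ∉ E} => x i) := by
  classical
  rw [hwt, hwt, hwt, Finset.card_filter, Finset.card_filter, Finset.card_filter,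
    ← Finset.sum_filter_add_sum_filter_not Finset.univ (· ∈ E)]
  congr 1
  · have h1 : Finset.univ.filter (· ∈ E) = E := by ext i; simp
    rw [h1, Finset.sum_subtype E (fun i => Iff.rfl)
      (fun i => if x i = true then 1 else 0)]
    exact Finset.sum_congr rfl fun i _ => by rw [hx i]
  · have h1 : Finset.univ.filter (fun i => ¬ i ∈ E) = Eᶜ := by ext i; simp
    rw [h1, Finset.sum_subtype Eᶜ (fun i => Finset.mem_compl)
      (fun i => if x i = true then 1 else 0)]

lemma sum_affine {β : Type*} (S : Finset β) (w : β → ℂ) (u : ℂ) :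
    (∑ x ∈ S, (u - 2 * w x)) = S.card * u - 2 * ∑ x ∈ S, w x := by
  rw [Finset.sum_sub_distrib, Finset.sum_const, ← Finset.mul_sum, nsmul_eq_mul]

lemma sum_affine_sq {β : Type*} (S : Finset β) (w : β → ℂ) (u : ℂ) :
    (∑ x ∈ S, (u - 2 * w x)^2)
      = S.card * u^2 - 4 * u * (∑ x ∈ S, w x) + 4 * ∑ x ∈ S, (w x)^2 := by
  have h : ∀ x ∈ S, (u - 2 * w x)^2 = u^2 - (4*u) * w x + 4 * (w x)^2 := by
    intro x _; ring
  rw [Finset.sum_congr rfl h, Finset.sum_add_distrib, Finset.sum_sub_distrib,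
    Finset.sum_const, ← Finset.mul_sum, ← Finset.mul_sum, nsmul_eq_mul]


/-- QFI lower bound after `t` erasures: if `C` is `t`-disjoint with respect to `E`, then
`2Tr(ρ²H²) - 2Tr(ρHρH) = 8 ∑_z p_z² Var(X_{C,z,E})` for the erasure-corrupted probe
state `ρ = ρ_C[E]`, where `p_z = |C_{z,E}|/|C|`; consequently any QFI value `Q`
satisfying the generator bound `Q ≥ 2Tr(ρ²H²) - 2Tr(ρHρH)` obeys
`Q ≥ 8 ∑_z p_z² Var(X_{C,z,E})`. -/
theorem QFI_lower_bound_after_erasures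
    (n : ℕ) (C : Finset (Fin n → Bool)) (hC : C.Nonempty)
    (E : Finset (Fin n)) (t : ℕ) (hEt : E.card = t)
    (CzE : ({i : Fin n // i ∈ E} → Bool) → Finset (Fin n → Bool))
    (hCzE : ∀ z, CzE z = C.filter (fun x => ∀ i : {i : Fin n // i ∈ E}, x i = z i))
    (Csh : ({i : Fin n // i ∈ E} → Bool) → Finset ({i : Fin n // i ∉ E} → Bool))
    (hCsh : ∀ z, Csh z =
      (CzE z).image (fun x => fun i : {i : Fin n // i ∉ E} => x i))
    (hdisj : ∀ y z, y ≠ z → Disjoint (Csh y) (Csh z))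
    (ρ : Matrix ({i : Fin n // i ∉ E} → Bool) ({i : Fin n // i ∉ E} → Bool) ℂ)
    (hρ : ρ = ((C.card : ℂ))⁻¹ •
      ∑ z : {i : Fin n // i ∈ E} → Bool, ∑ x ∈ Csh z, ∑ y ∈ Csh z,
        Matrix.single x y (1 : ℂ)) :
    (2 * (ρ * ρ * (HopG _ * HopG _)).trace
        - 2 * (ρ * HopG _ * ρ * HopG _).trace
      = ((8 * ∑ z : {i : Fin n // i ∈ E} → Bool,
            (((CzE z).card : ℝ) / (C.card : ℝ)) ^ 2 * wvar (CzE z) hwt : ℝ) : ℂ)) ∧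
    (∀ Q : ℝ,
      (2 * (ρ * ρ * (HopG _ * HopG _)).trace
        - 2 * (ρ * HopG _ * ρ * HopG _).trace).re ≤ Q →
      8 * ∑ z : {i : Fin n // i ∈ E} → Bool,
          (((CzE z).card : ℝ) / (C.card : ℝ)) ^ 2 * wvar (CzE z) hwt ≤ Q) := by
  classical
  have hM : (C.card : ℂ) ≠ 0 := by
    exact_mod_cast Nat.cast_ne_zero.mpr (Finset.card_ne_zero.mpr hC)
  have hMR : (C.card : ℝ) ≠ 0 := by
    exact_mod_cast Nat.cast_ne_zero.mpr (Finset.card_ne_zero.mpr hC)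
  set c : ℂ := (C.card : ℂ)⁻¹ with hc
  set d : ({i : Fin n // i ∉ E} → Bool) → ℂ :=
    fun x => ∑ j, if x j then -1 else 1 with hd
  -- H is diagonal
  have hH : HopG {i : Fin n // i ∉ E} = Matrix.diagonal d := by
    ext x y
    by_cases h : x = y <;>
      simp [HopG, Matrix.sum_apply, Matrix.diagonal_apply, h, hd]
  set S : ({i : Fin n // i ∉ E} → Bool) → ({i : Fin n // i ∉ E} → Bool) → ℂ :=
    fun x y => ∑ z, if x ∈ Csh z ∧ y ∈ Csh z then (1:ℂ) else 0 with hS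
  -- entries of ρ
  have hkey : ∀ (T : Finset ({i : Fin n // i ∉ E} → Bool)) (x y),
      (∑ a ∈ T, ∑ b ∈ T, if a = x ∧ b = y then (1:ℂ) else 0)
        = if x ∈ T ∧ y ∈ T then 1 else 0 := by
    intro T x y
    have inner : ∀ a, (∑ b ∈ T, if a = x ∧ b = y then (1:ℂ) else 0)
        = if a = x ∧ y ∈ T then 1 else 0 := by
      intro a; by_cases hax : a = x
      · simp [hax, Finset.sum_ite_eq' T y (fun _ => (1:ℂ))]
      · simp [hax]
    rw [Finset.sum_congr rfl fun a _ => inner a]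
    by_cases hy : y ∈ T
    · simp [hy, Finset.sum_ite_eq' T x (fun _ => (1:ℂ))]
    · simp [hy]
  have hrho : ∀ x y, ρ x y = c * S x y := by
    intro x y
    rw [hρ]
    simp only [Matrix.smul_apply, Matrix.sum_apply, smul_eq_mul, hS]
    congr 1
    refine Finset.sum_congr rfl fun z _ => ?_
    rw [← hkey (Csh z) x y]
    refine Finset.sum_congr rfl fun a _ => Finset.sum_congr rfl fun b _ => ?_
    simp [Matrix.single]
  -- S is 0/1-valued and idempotent under the symmetric product
  have hSidem : ∀ x y, S x y * S y x = S x y := by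
    intro x y
    have hsymm : S y x = S x y := by
      simp only [hS]
      exact Finset.sum_congr rfl fun z _ => if_congr and_comm rfl rfl
    rw [hsymm]
    by_cases hex : ∃ z₀, x ∈ Csh z₀ ∧ y ∈ Csh z₀
    · obtain ⟨z₀, h₀⟩ := hex
      have h1 : S x y = 1 := by
        simp only [hS]
        rw [Finset.sum_eq_single z₀]
        · simp [h₀]
        · intro z _ hz
          have : ¬(x ∈ Csh z ∧ y ∈ Csh z) := fun h =>
            (Finset.disjoint_left.mp (hdisj z z₀ hz) h.1) h₀.1
          simp [this]
        · simp
      rw [h1]; ring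
    · have h0 : S x y = 0 := by
        simp only [hS]
        refine Finset.sum_eq_zero fun z _ => ?_
        rw [if_neg]; exact fun hc => hex ⟨z, hc⟩
      rw [h0]; ring
  -- sum transformation via disjointness
  have hsum : ∀ f : ({i : Fin n // i ∉ E} → Bool) → ({i : Fin n // i ∉ E} → Bool) → ℂ, (∑ x, ∑ y, S x y * f x y)
      = ∑ z, ∑ x ∈ Csh z, ∑ y ∈ Csh z, f x y := by
    intro f
    simp only [hS, Finset.sum_mul, ite_mul, one_mul, zero_mul]
    rw [Finset.sum_congr rfl fun x _ => Finset.sum_comm, Finset.sum_comm]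
    refine Finset.sum_congr rfl fun z _ => ?_
    have step : ∀ x, (∑ y, if x ∈ Csh z ∧ y ∈ Csh z then f x y else 0)
        = if x ∈ Csh z then (∑ y ∈ Csh z, f x y) else 0 := by
      intro x; by_cases hx : x ∈ Csh z
      · rw [if_pos hx]
        simp only [hx, true_and]
        exact Fintype.sum_ite_mem _ _
      · simp [hx]
    rw [Finset.sum_congr rfl fun x _ => step x, Fintype.sum_ite_mem]
  -- trace formulas
  have h1 : (ρ * ρ * (HopG {i : Fin n // i ∉ E} * HopG _)).trace
      = ∑ x, ∑ y, ρ x y * ρ y x * (d x * d x) := by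
    rw [hH, Matrix.diagonal_mul_diagonal]
    simp only [Matrix.trace, Matrix.diag]
    refine Finset.sum_congr rfl fun x _ => ?_
    rw [Matrix.mul_diagonal, Matrix.mul_apply]
    exact Finset.sum_mul _ _ _
  have h2 : (ρ * HopG {i : Fin n // i ∉ E} * ρ * HopG _).trace
      = ∑ x, ∑ y, ρ x y * ρ y x * (d x * d y) := by
    rw [hH]
    simp only [Matrix.trace, Matrix.diag]
    refine Finset.sum_congr rfl fun x _ => ?_
    rw [Matrix.mul_diagonal, Matrix.mul_apply, Finset.sum_mul]
    refine Finset.sum_congr rfl fun y _ => ?_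
    rw [Matrix.mul_diagonal]
    ring
  have h3 : ∀ f : ({i : Fin n // i ∉ E} → Bool) → ({i : Fin n // i ∉ E} → Bool) → ℂ, (∑ x, ∑ y, ρ x y * ρ y x * f x y)
      = c^2 * ∑ z, ∑ x ∈ Csh z, ∑ y ∈ Csh z, f x y := by
    intro f
    have hterm : ∀ x y, ρ x y * ρ y x * f x y = c^2 * (S x y * f x y) := by
      intro x y
      rw [hrho x y, hrho y x]
      calc c * S x y * (c * S y x) * f x y
          = c^2 * (S x y * S y x * f x y) := by ring
        _ = c^2 * (S x y * f x y) := by rw [hSidem]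
    simp_rw [hterm, ← Finset.mul_sum]
    rw [hsum f]
  -- per-z identity
  have perz : ∀ z : {i : Fin n // i ∈ E} → Bool,
      2 * c^2 * ((∑ x ∈ Csh z, ∑ y ∈ Csh z, d x * d x)
          - (∑ x ∈ Csh z, ∑ y ∈ Csh z, d x * d y))
        = ((8 * ((((CzE z).card : ℝ) / (C.card : ℝ)) ^ 2 * wvar (CzE z) hwt) : ℝ) : ℂ) := by
    intro z
    have hmem : ∀ x ∈ CzE z, ∀ i : {i : Fin n // i ∈ E}, x i = z i := by
      intro x hx
      exact (Finset.mem_filter.mp (by rwa [hCzE] at hx)).2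
    have hinj : ∀ x ∈ CzE z, ∀ y ∈ CzE z,
        (fun i : {i : Fin n // i ∉ E} => x i) = (fun i : {i : Fin n // i ∉ E} => y i)
          → x = y := by
      intro a ha b hb hab
      funext i
      by_cases hi : i ∈ E
      · rw [hmem a ha ⟨i, hi⟩, hmem b hb ⟨i, hi⟩]
      · exact congrFun hab ⟨i, hi⟩
    have hcard : (Csh z).card = (CzE z).card := by
      rw [hCsh]
      exact Finset.card_image_of_injOn fun a ha b hb h => hinj a ha b hb h
    set u : ℂ := (Fintype.card {i : Fin n // i ∉ E} : ℂ) + 2 * (hwt z : ℂ) with hu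
    have hdres : ∀ x ∈ CzE z, d (fun i : {i : Fin n // i ∉ E} => x i)
        = u - 2 * (hwt x : ℂ) := by
      intro x hx
      have e0 : d (fun i : {i : Fin n // i ∉ E} => x i)
          = (Fintype.card {i : Fin n // i ∉ E} : ℂ)
            - 2 * (hwt (fun i : {i : Fin n // i ∉ E} => x i) : ℂ) := by
        simp only [hd]
        exact d_eq_card_sub _
      have e1 : (hwt (fun i : {i : Fin n // i ∉ E} => x i) : ℂ)
          = (hwt x : ℂ) - (hwt z : ℂ) := by
        have h := hwt_split z x (hmem x hx)
        push_cast [h]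
        ring
      rw [e0, e1, hu]; ring
    have hsum1 : (∑ x' ∈ Csh z, d x') = ∑ x ∈ CzE z, (u - 2 * (hwt x : ℂ)) := by
      rw [hCsh, Finset.sum_image hinj]
      exact Finset.sum_congr rfl hdres
    have hsum2 : (∑ x' ∈ Csh z, (d x')^2) = ∑ x ∈ CzE z, (u - 2 * (hwt x : ℂ))^2 := by
      rw [hCsh, Finset.sum_image hinj]
      exact Finset.sum_congr rfl fun x hx => by rw [hdres x hx]
    have hP : (∑ x ∈ Csh z, ∑ y ∈ Csh z, d x * d x)
        = ((CzE z).card : ℂ) * ∑ x ∈ CzE z, (u - 2 * (hwt x : ℂ))^2 :=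
      calc ∑ x ∈ Csh z, ∑ y ∈ Csh z, d x * d x
          = ∑ x ∈ Csh z, ((Csh z).card : ℂ) * (d x)^2 := by
            refine Finset.sum_congr rfl fun x _ => ?_
            rw [Finset.sum_const, nsmul_eq_mul]; ring
        _ = ((Csh z).card : ℂ) * ∑ x ∈ Csh z, (d x)^2 := by rw [Finset.mul_sum]
        _ = _ := by rw [hcard, hsum2]
    have hQ : (∑ x ∈ Csh z, ∑ y ∈ Csh z, d x * d y)
        = (∑ x ∈ CzE z, (u - 2 * (hwt x : ℂ)))^2 := by
      rw [← Finset.sum_mul_sum, hsum1, sq]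
    rw [hP, hQ, sum_affine, sum_affine_sq]
    by_cases hN : (CzE z).card = 0
    · have hempty : CzE z = ∅ := Finset.card_eq_zero.mp hN
      simp [hempty, wvar]
    · have hNC : ((CzE z).card : ℂ) ≠ 0 := Nat.cast_ne_zero.mpr hN
      have hNR : ((CzE z).card : ℝ) ≠ 0 := Nat.cast_ne_zero.mpr hN
      simp only [wvar]
      push_cast
      rw [hc]
      field_simp
      ring
  -- assemble
  have hsplit2 : ∀ (P Q : ({i : Fin n // i ∈ E} → Bool) → ℂ),
      2 * (c^2 * ∑ z, P z) - 2 * (c^2 * ∑ z, Q z) = ∑ z, 2 * c^2 * (P z - Q z) := by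
    intro P Q
    rw [← Finset.mul_sum, Finset.sum_sub_distrib]
    ring
  have keyeq : 2 * (ρ * ρ * (HopG {i : Fin n // i ∉ E} * HopG _)).trace
      - 2 * (ρ * HopG _ * ρ * HopG _).trace
      = ((8 * ∑ z : {i : Fin n // i ∈ E} → Bool,
          (((CzE z).card : ℝ) / (C.card : ℝ)) ^ 2 * wvar (CzE z) hwt : ℝ) : ℂ) := by
    rw [h1, h2, h3 (fun x y => d x * d x), h3 (fun x y => d x * d y), hsplit2]
    have hcast : ((8 * ∑ z : {i : Fin n // i ∈ E} → Bool,
          (((CzE z).card : ℝ) / (C.card : ℝ)) ^ 2 * wvar (CzE z) hwt : ℝ) : ℂ)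
        = ∑ z : {i : Fin n // i ∈ E} → Bool,
            ((8 * ((((CzE z).card : ℝ) / (C.card : ℝ)) ^ 2 * wvar (CzE z) hwt) : ℝ) : ℂ) := by
      push_cast
      rw [Finset.mul_sum]
    rw [hcast]
    exact Finset.sum_congr rfl fun z _ => perz z
  constructor
  · exact keyeq
  · intro Q hQ
    simp only [Nat.cast_ofNat] at hQ
    rw [keyeq] at hQ
    rwa [Complex.ofReal_re] at hQ
end

section
/- (Boosting Lemma.) Let C be the concatenation of a binary code C_outer of length m with an inner length-r repetition code, so n = mr. Let E ⊆ {1,...,n} be a set of t' erased positions and let E_g = { ⌊(i-1)/r⌋ + 1 : i ∈ E } ⊆ {1,...,m} be the induced set of t outer blocks. Suppose C_outer is t-disjoint with respect to E_g. Then the erasure QFI lower bound scales as Q_E(C) ≥ 8 r² ∑_{z_g ∈ F_2^t} p_{z_g}² Var(X_{C_outer, z_g, E_g}), i.e., concatenation boosts the lower bound by a factor r². -/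
open Finset

/-- The `r`-fold repetition concatenation: each bit of a length-`m` word is replaced by
`r` copies of itself (positions indexed by `Fin m × Fin r`, so `n = m·r`). -/
def concat (m r : ℕ) (x : Fin m → Bool) : Fin m × Fin r → Bool :=
  fun p => x p.1

lemma concat_inj (m r : ℕ) (hr : 0 < r) : Function.Injective (concat m r) := by
  intro x y h
  funext j
  exact congrFun h (j, ⟨0, hr⟩)

lemma hwt_concat (m r : ℕ) (x : Fin m → Bool) : hwt (concat m r x) = r * hwt x := by
  unfold hwt concat
  have h : (univ.filter fun p : Fin m × Fin r => x p.1 = true)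
      = (univ.filter fun j => x j = true) ×ˢ (univ : Finset (Fin r)) := by
    ext p; simp
  rw [h, card_product, card_univ, Fintype.card_fin, Nat.mul_comm]

lemma wvar_mul {β : Type*} (D : Finset β) (f : β → ℕ) (r : ℕ) :
    wvar D (fun x => r * f x) = (r : ℝ) ^ 2 * wvar D f := by
  unfold wvar
  push_cast
  simp only [mul_pow, ← Finset.mul_sum]
  rw [mul_div_assoc, mul_div_assoc, mul_pow]
  ring

lemma wvar_image {β γ : Type*} [DecidableEq γ] (D : Finset β) (g : β → γ)
    (hg : Function.Injective g) (f : γ → ℕ) :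
    wvar (D.image g) f = wvar D (fun x => f (g x)) := by
  unfold wvar
  rw [Finset.sum_image (fun a _ b _ h => hg h), Finset.sum_image (fun a _ b _ h => hg h),
    Finset.card_image_of_injective _ hg]

/-- Boosting Lemma: let `C` be the concatenation of `C_outer` (length `m`) with an
inner length-`r` repetition code, `E` a set of erased positions projecting to the set
`E_g` of outer blocks, and suppose `C_outer` is `t`-disjoint with respect to `E_g`.
If `Q` obeys the erasure QFI lower bound `Q ≥ 8 ∑_z p_z² Var(X_{C,z,E})` for `C`,
then `Q ≥ 8 r² ∑_{z_g} p_{z_g}² Var(X_{C_outer, z_g, E_g})`. -/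
theorem boosting_lemma (m r : ℕ) (hr : 0 < r)
    (Co : Finset (Fin m → Bool)) (hCo : Co.Nonempty)
    (C : Finset (Fin m × Fin r → Bool)) (hC : C = Co.image (concat m r))
    (E : Finset (Fin m × Fin r)) (Eg : Finset (Fin m))
    (hEg : Eg = E.image Prod.fst)
    (hdisj : ∀ y z : {j : Fin m // j ∈ Eg} → Bool, y ≠ z →
      Disjoint
        ((Co.filter (fun x => ∀ j : {j : Fin m // j ∈ Eg}, x j = y j)).image
          (fun x => fun j : {j : Fin m // j ∉ Eg} => x j))
        ((Co.filter (fun x => ∀ j : {j : Fin m // j ∈ Eg}, x j = z j)).image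
          (fun x => fun j : {j : Fin m // j ∉ Eg} => x j)))
    (Q : ℝ)
    (hQ : 8 * ∑ z : {p : Fin m × Fin r // p ∈ E} → Bool,
        (((C.filter (fun x => ∀ p : {p : Fin m × Fin r // p ∈ E}, x p = z p)).card : ℝ)
            / (C.card : ℝ)) ^ 2 *
          wvar (C.filter (fun x => ∀ p : {p : Fin m × Fin r // p ∈ E}, x p = z p)) hwt
      ≤ Q) :
    8 * (r : ℝ) ^ 2 * ∑ zg : {j : Fin m // j ∈ Eg} → Bool,
        (((Co.filter (fun x => ∀ j : {j : Fin m // j ∈ Eg}, x j = zg j)).card : ℝ)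
            / (Co.card : ℝ)) ^ 2 *
          wvar (Co.filter (fun x => ∀ j : {j : Fin m // j ∈ Eg}, x j = zg j)) hwt
      ≤ Q := by
  subst hC hEg
  refine le_trans (le_of_eq ?_) hQ
  have hmem : ∀ p : {p : Fin m × Fin r // p ∈ E}, p.1.1 ∈ E.image Prod.fst :=
    fun p => mem_image_of_mem _ p.2
  set φ : ({j : Fin m // j ∈ E.image Prod.fst} → Bool) →
      ({p : Fin m × Fin r // p ∈ E} → Bool) :=
    fun zg p => zg ⟨p.1.1, hmem p⟩ with hφ
  have hφinj : Function.Injective φ := by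
    intro y z h
    funext j
    obtain ⟨p, hpE, hpj⟩ := mem_image.1 j.2
    have h2 := congrFun h ⟨p, hpE⟩
    simp only [hφ] at h2
    rwa [show (⟨p.1, hmem ⟨p, hpE⟩⟩ : {j : Fin m // j ∈ E.image Prod.fst}) = j from
      Subtype.ext hpj] at h2
  -- the filter for z = φ zg is the image of the outer filter
  have hfilter : ∀ zg : {j : Fin m // j ∈ E.image Prod.fst} → Bool,
      ((Co.image (concat m r)).filter
        (fun x => ∀ p : {p : Fin m × Fin r // p ∈ E}, x p.1 = φ zg p))
      = (Co.filter (fun x => ∀ j : {j : Fin m // j ∈ E.image Prod.fst}, x j.1 = zg j)).image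
          (concat m r) := by
    intro zg
    rw [Finset.filter_image]
    congr 1
    apply Finset.filter_congr
    intro x _
    simp only [concat, hφ]
    constructor
    · intro h j
      obtain ⟨p, hpE, hpj⟩ := mem_image.1 j.2
      have h2 := h ⟨p, hpE⟩
      rwa [show (⟨p.1, hmem ⟨p, hpE⟩⟩ : {j : Fin m // j ∈ E.image Prod.fst}) = j from
        Subtype.ext hpj, hpj] at h2
    · intro h p
      exact h ⟨p.1.1, hmem p⟩
  -- terms vanish off the image of φ
  have hvanish : ∀ z : {p : Fin m × Fin r // p ∈ E} → Bool, z ∉ Finset.univ.image φ →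
      ((Co.image (concat m r)).filter
          (fun x => ∀ p : {p : Fin m × Fin r // p ∈ E}, x p.1 = z p)) = ∅ := by
    intro z hz
    rw [Finset.filter_eq_empty_iff]
    rintro x' hx' hagree
    obtain ⟨x, hx, rfl⟩ := mem_image.1 hx'
    exact hz (mem_image.2 ⟨fun j => x j.1, mem_univ _, funext fun p => hagree p⟩)
  have hsum : (∑ z : {p : Fin m × Fin r // p ∈ E} → Bool,
        ((((Co.image (concat m r)).filter
            (fun x => ∀ p : {p : Fin m × Fin r // p ∈ E}, x p.1 = z p)).card : ℝ)
            / ((Co.image (concat m r)).card : ℝ)) ^ 2 *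
          wvar ((Co.image (concat m r)).filter
            (fun x => ∀ p : {p : Fin m × Fin r // p ∈ E}, x p.1 = z p)) hwt)
      = ∑ zg : {j : Fin m // j ∈ E.image Prod.fst} → Bool,
          (r : ℝ) ^ 2 *
          ((((Co.filter
              (fun x => ∀ j : {j : Fin m // j ∈ E.image Prod.fst}, x j.1 = zg j)).card : ℝ)
              / (Co.card : ℝ)) ^ 2 *
            wvar (Co.filter
              (fun x => ∀ j : {j : Fin m // j ∈ E.image Prod.fst}, x j.1 = zg j)) hwt) := by
    rw [← Finset.sum_subset (Finset.subset_univ (Finset.univ.image φ))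
      (fun z _ hz => by rw [hvanish z hz]; simp [wvar]),
      Finset.sum_image (fun a _ b _ h => hφinj h)]
    apply Finset.sum_congr rfl
    intro zg _
    rw [hfilter zg, Finset.card_image_of_injective _ (concat_inj m r hr),
      Finset.card_image_of_injective _ (concat_inj m r hr),
      wvar_image _ _ (concat_inj m r hr)]
    have h3 : (fun x => hwt (concat m r x)) = fun x => r * hwt x := by
      funext x; exact hwt_concat m r x
    rw [h3, wvar_mul]
    ring
  rw [hsum, Finset.mul_sum, Finset.mul_sum]
  exact Finset.sum_congr rfl (fun zg _ => by ring)
end
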